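/- Let S be a Gröbner–Shirshov basis in k⟨X⟩ ⊗ k⟨Y⟩ and s₁, s₂ ∈ S. If a normal word w satisfies w = a₁s̄₁b₁ = a₂s̄₂b₂ for some a₁, b₁, a₂, b₂ ∈ N, then a₁s₁b₁ - a₂s₂b₂ can be written as Σ αᵢcᵢsᵢdᵢ with sᵢ ∈ S, cᵢ, dᵢ ∈ N, and cᵢs̄ᵢdᵢ < w. -/

import Mathlib

/-- A monomial order: a well-founded strict total order compatible with multiplication. -/
def MonOrd {M : Type*} [Monoid M] (lt : M → M → Prop) : Prop :=
  IsStrictTotalOrder M lt ∧ WellFounded lt ∧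
    ∀ u v w₁ w₂ : M, lt u v → lt (w₁ * u * w₂) (w₁ * v * w₂)

/-- `m` is the leading word of `f` with respect to the order `lt`. -/
def IsLeadR {k M : Type*} [Semiring k] (lt : M → M → Prop)
    (f : MonoidAlgebra k M) (m : M) : Prop :=
  m ∈ f.coeff.support ∧ ∀ u ∈ f.coeff.support, u ≠ m → lt u m

/-- `f` is monic: its leading coefficient is `1`. -/
def MonicR {k M : Type*} [Semiring k] (lt : M → M → Prop) (f : MonoidAlgebra k M) : Prop :=
  ∃ m, IsLeadR lt f m ∧ f.coeff m = 1

/-- The monomial `m` viewed as an element of the monoid algebra. -/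
noncomputable def mono (k : Type*) {M : Type*} [Semiring k] [Monoid M] (m : M) :
    MonoidAlgebra k M := MonoidAlgebra.of k M m

/-- `h` is trivial modulo `(S, w)`: it is a linear combination `Σ αᵢ aᵢ sᵢ bᵢ`
with `sᵢ ∈ S` and leading words `aᵢ s̄ᵢ bᵢ < w`. -/
def TrivModR {k M : Type*} [Semiring k] [Monoid M] (lt : M → M → Prop)
    (S : Set (MonoidAlgebra k M)) (w : M) (h : MonoidAlgebra k M) : Prop :=
  ∃ (n : ℕ) (α : Fin n → k) (a b : Fin n → M) (s : Fin n → MonoidAlgebra k M),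
    (∀ i, s i ∈ S) ∧
    h = ∑ i, α i • (mono k (a i) * s i * mono k (b i)) ∧
    ∀ i, ∃ m, IsLeadR lt (s i) m ∧ lt (a i * m * b i) w

/-- Gröbner–Shirshov basis in a free associative algebra `k⟨Z⟩`:
all intersection and inclusion compositions are trivial. -/
def FIsGSB {k Z : Type*} [Ring k] (lt : FreeMonoid Z → FreeMonoid Z → Prop)
    (S : Set (MonoidAlgebra k (FreeMonoid Z))) : Prop :=
  (∀ s ∈ S, MonicR lt s) ∧
  ∀ f ∈ S, ∀ g ∈ S, ∀ mf mg : FreeMonoid Z, IsLeadR lt f mf → IsLeadR lt g mg →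
    ((∀ a b : FreeMonoid Z, mf * b = a * mg →
        (mf * b).length < mf.length + mg.length →
        TrivModR lt S (mf * b) (f * mono k b - mono k a * g)) ∧
     (∀ a b : FreeMonoid Z, mf = a * mg * b →
        TrivModR lt S mf (f - mono k a * g * mono k b)))

/-- the deg-lex order on words induced by an order on letters -/
def degLex {A : Type*} (ltA : A → A → Prop) (u v : FreeMonoid A) : Prop :=
  u.length < v.length ∨ (u.length = v.length ∧ List.Lex ltA u.toList v.toList)

/-- Normal words of `k⟨X⟩ ⊗ k⟨Y⟩`: the monoid `X* × Y*`
(whose multiplication is `(u^X u^Y)(v^X v^Y) = u^X v^X u^Y v^Y`). -/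
abbrev NW (X Y : Type*) := FreeMonoid X × FreeMonoid Y

/-- the (deg-)lex order on `N = X*Y*` built from orders on `X*` and `Y*`:
`u > v` iff `u^X > v^X` or (`u^X = v^X` and `u^Y > v^Y`). -/
def lexNW {X Y : Type*} (ltX : FreeMonoid X → FreeMonoid X → Prop)
    (ltY : FreeMonoid Y → FreeMonoid Y → Prop) (u v : NW X Y) : Prop :=
  ltX u.1 v.1 ∨ (u.1 = v.1 ∧ ltY u.2 v.2)

/-- All compositions `(f,g)_w = p` in `k⟨X⟩ ⊗ k⟨Y⟩`, where `mf, mg` are the leading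
words of `f, g`.  The cases are: 1.1 `X`-inclusion only, 1.2 `Y`-inclusion only,
1.3 `X,Y`-inclusion, 1.4 `X,Y`-skew-inclusion, 2.1 `X`-intersection only,
2.2 `Y`-intersection only, 2.3 `X,Y`-intersection, 2.4 `X,Y`-skew-intersection,
3.1 `X`-inclusion and `Y`-intersection, 3.2 `X`-intersection and `Y`-inclusion. -/
def IsComp {k X Y : Type*} [Ring k] (f g : MonoidAlgebra k (NW X Y))
    (mf mg : NW X Y) (p : MonoidAlgebra k (NW X Y)) (w : NW X Y) : Prop :=
  let e : NW X Y → MonoidAlgebra k (NW X Y) := fun m => mono k m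
  let fx := mf.1; let fy := mf.2; let gx := mg.1; let gy := mg.2
  -- 1.1 X-inclusion only
  (∃ (a b : FreeMonoid X) (c : FreeMonoid Y), fx = a * gx * b ∧
     ((w = (fx, fy * c * gy) ∧ p = f * e (1, c * gy) - e (a, fy * c) * g * e (b, 1)) ∨
      (w = (fx, gy * c * fy) ∧ p = e (1, gy * c) * f - e (a, 1) * g * e (b, c * fy)))) ∨
  -- 1.2 Y-inclusion only
  (∃ (a : FreeMonoid X) (c d : FreeMonoid Y), fy = c * gy * d ∧
     ((w = (fx * a * gx, fy) ∧ p = f * e (a * gx, 1) - e (fx * a, c) * g * e (1, d)) ∨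
      (w = (gx * a * fx, fy) ∧ p = e (gx * a, 1) * f - e (1, c) * g * e (a * fx, d)))) ∨
  -- 1.3 X,Y-inclusion
  (∃ (a b : FreeMonoid X) (c d : FreeMonoid Y), fx = a * gx * b ∧ fy = c * gy * d ∧
     w = (fx, fy) ∧ p = f - e (a, c) * g * e (b, d)) ∨
  -- 1.4 X,Y-skew-inclusion
  (∃ (a b : FreeMonoid X) (c d : FreeMonoid Y), fx = a * gx * b ∧ gy = c * fy * d ∧
     w = (fx, gy) ∧ p = e (1, c) * f * e (1, d) - e (a, 1) * g * e (b, 1)) ∨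
  -- 2.1 X-intersection only
  (∃ (a b : FreeMonoid X) (c : FreeMonoid Y), fx * a = b * gx ∧
     (fx * a).length < fx.length + gx.length ∧
     ((w = (fx * a, fy * c * gy) ∧ p = f * e (a, c * gy) - e (b, fy * c) * g) ∨
      (w = (fx * a, gy * c * fy) ∧
        p = e (1, gy * c) * f * e (a, 1) - e (b, 1) * g * e (1, c * fy)))) ∨
  -- 2.2 Y-intersection only
  (∃ (a : FreeMonoid X) (c d : FreeMonoid Y), fy * c = d * gy ∧
     (fy * c).length < fy.length + gy.length ∧
     ((w = (fx * a * gx, fy * c) ∧ p = f * e (a * gx, c) - e (fx * a, d) * g) ∨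
      (w = (gx * a * fx, fy * c) ∧
        p = e (gx * a, 1) * f * e (1, c) - e (1, d) * g * e (a * fx, 1)))) ∨
  -- 2.3 X,Y-intersection
  (∃ (a b : FreeMonoid X) (c d : FreeMonoid Y), fx * a = b * gx ∧ fy * c = d * gy ∧
     (fx * a).length < fx.length + gx.length ∧ (fy * c).length < fy.length + gy.length ∧
     w = (fx * a, fy * c) ∧ p = f * e (a, c) - e (b, d) * g) ∨
  -- 2.4 X,Y-skew-intersection
  (∃ (a b : FreeMonoid X) (c d : FreeMonoid Y), fx * a = b * gx ∧ c * fy = gy * d ∧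
     (fx * a).length < fx.length + gx.length ∧ (c * fy).length < fy.length + gy.length ∧
     w = (fx * a, c * fy) ∧ p = e (1, c) * f * e (a, 1) - e (b, 1) * g * e (1, d)) ∨
  -- 3.1 X-inclusion and Y-intersection
  (∃ (a b : FreeMonoid X) (c d : FreeMonoid Y), fx = a * gx * b ∧
     ((fy * c = d * gy ∧ (fy * c).length < fy.length + gy.length ∧
        w = (fx, fy * c) ∧ p = f * e (1, c) - e (a, d) * g * e (b, 1)) ∨
      (c * fy = gy * d ∧ (c * fy).length < fy.length + gy.length ∧
        w = (fx, c * fy) ∧ p = e (1, c) * f - e (a, 1) * g * e (b, d)))) ∨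
  -- 3.2 X-intersection and Y-inclusion
  (∃ (a b : FreeMonoid X) (c d : FreeMonoid Y), fx * a = b * gx ∧
     (fx * a).length < fx.length + gx.length ∧
     ((fy = c * gy * d ∧ w = (fx * a, fy) ∧ p = f * e (a, 1) - e (b, c) * g * e (1, d)) ∨
      (gy = c * fy * d ∧ w = (fx * a, gy) ∧ p = e (1, c) * f * e (a, d) - e (b, 1) * g)))

/-- Gröbner–Shirshov basis in `k⟨X⟩ ⊗ k⟨Y⟩`: a set of monic polynomials
all of whose compositions are trivial. -/
def IsGSB {k X Y : Type*} [Ring k] (lt : NW X Y → NW X Y → Prop)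
    (S : Set (MonoidAlgebra k (NW X Y))) : Prop :=
  (∀ s ∈ S, MonicR lt s) ∧
  ∀ f ∈ S, ∀ g ∈ S, ∀ (mf mg : NW X Y) (p : MonoidAlgebra k (NW X Y)) (w : NW X Y),
    IsLeadR lt f mf → IsLeadR lt g mg → IsComp f g mf mg p w → TrivModR lt S w p

/-- the abelianization map `γ : X* → [X]`, with `[X]` the free commutative monoid
on `X` realized as `Multiplicative (Multiset X)`. -/
def gam {X : Type*} (u : FreeMonoid X) : Multiplicative (Multiset X) :=
  Multiplicative.ofAdd (↑u.toList : Multiset X)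

/-- the order on `X*` lifted from a monomial order on `[X]`:
`u > v` iff `γ(u) > γ(v)`, or `γ(u) = γ(v)` and `u >_lex v`. -/
def liftOrd {X : Type*} [LinearOrder X]
    (ltC : Multiplicative (Multiset X) → Multiplicative (Multiset X) → Prop)
    (u v : FreeMonoid X) : Prop :=
  ltC (gam u) (gam v) ∨ (gam u = gam v ∧ List.Lex (· < ·) u.toList v.toList)

/-- `δ` on monomials: the weakly increasing word representing a commutative monomial. -/
noncomputable def dword {X : Type*} [LinearOrder X] (m : Multiplicative (Multiset X)) :
    FreeMonoid X :=
  FreeMonoid.ofList (Multiset.sort (Multiplicative.toAdd m) (· ≤ ·))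

/-- the lexicographic splitting `δ : k[X] → k⟨X⟩`. -/
noncomputable def deltaMap {k X : Type*} [Semiring k] [LinearOrder X]
    (f : MonoidAlgebra k (Multiplicative (Multiset X))) :
    MonoidAlgebra k (FreeMonoid X) :=
  MonoidAlgebra.ofCoeff (Finsupp.mapDomain dword f.coeff)

/-- the set `S₁ = {xᵢxⱼ - xⱼxᵢ : xᵢ > xⱼ}` of commutators in `k⟨X⟩`. -/
noncomputable def commSet (k X : Type*) [Ring k] [LinearOrder X] :
    Set (MonoidAlgebra k (FreeMonoid X)) :=
  {p | ∃ i j : X, j < i ∧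
    p = mono k (FreeMonoid.of i * FreeMonoid.of j) - mono k (FreeMonoid.of j * FreeMonoid.of i)}

/-- `U(m)`: commutative monomials in the variables strictly between the least and the
greatest variable occurring in `m`. -/
def UU {X : Type*} [LinearOrder X] (m : Multiplicative (Multiset X)) :
    Set (Multiplicative (Multiset X)) :=
  {u | ∀ y ∈ Multiplicative.toAdd u,
     (∃ z ∈ Multiplicative.toAdd m, z < y) ∧ (∃ z ∈ Multiplicative.toAdd m, y < z)}

/-- Normal words of `k[X] ⊗ k⟨Y⟩`: the monoid `[X]Y*`. -/
abbrev CW (X Y : Type*) := Multiplicative (Multiset X) × FreeMonoid Y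

/-- the order on `[X]Y*`: compare the `Y`-part first, then the `[X]`-part. -/
def cwOrd {X Y : Type*}
    (ltC : Multiplicative (Multiset X) → Multiplicative (Multiset X) → Prop)
    (ltY : FreeMonoid Y → FreeMonoid Y → Prop) (u v : CW X Y) : Prop :=
  ltY u.2 v.2 ∨ (u.2 = v.2 ∧ ltC u.1 v.1)

/-- the order on `X*Y*` lifted from the order on `[X]Y*`, breaking ties by `lex`
on the `X`-component. -/
def liftNW {X Y : Type*} [LinearOrder X]
    (ltC : Multiplicative (Multiset X) → Multiplicative (Multiset X) → Prop)
    (ltY : FreeMonoid Y → FreeMonoid Y → Prop) (u v : NW X Y) : Prop :=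
  cwOrd ltC ltY (gam u.1, u.2) (gam v.1, v.2) ∨
    ((gam u.1 = gam v.1 ∧ u.2 = v.2) ∧ List.Lex (· < ·) u.1.toList v.1.toList)

/-- `δ : k[X] ⊗ k⟨Y⟩ → k⟨X⟩ ⊗ k⟨Y⟩`, the lexicographic splitting extended by the
identity on `Y`-words. -/
noncomputable def deltaNW {k X Y : Type*} [Semiring k] [LinearOrder X]
    (f : MonoidAlgebra k (CW X Y)) : MonoidAlgebra k (NW X Y) :=
  MonoidAlgebra.ofCoeff (Finsupp.mapDomain (fun m : CW X Y => ((dword m.1, m.2) : NW X Y)) f.coeff)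

/-- Mikhalev–Zolotykh compositions in `k[X] ⊗ k⟨Y⟩`: inclusion `C₁`, overlap `C₂`
and external `C₃` compositions, where `mf`, `mg` are the leading words of `f`, `g`,
and `L = lcm(mf^X, mg^X)`. -/
def MZComp {k X Y : Type*} [Ring k] [DecidableEq X]
    (ltC : Multiplicative (Multiset X) → Multiplicative (Multiset X) → Prop)
    (f g : MonoidAlgebra k (CW X Y)) (mf mg : CW X Y)
    (p : MonoidAlgebra k (CW X Y)) (w : CW X Y) : Prop :=
  let e : CW X Y → MonoidAlgebra k (CW X Y) := fun m => mono k m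
  let fX := Multiplicative.toAdd mf.1; let gX := Multiplicative.toAdd mg.1
  let L : Multiset X := fX ∪ gX
  let Lf : Multiplicative (Multiset X) := Multiplicative.ofAdd (L - fX)
  let Lg : Multiplicative (Multiset X) := Multiplicative.ofAdd (L - gX)
  -- C₁ : inclusion
  (∃ c d : FreeMonoid Y, mf.2 = c * mg.2 * d ∧
     (mf.2 = mg.2 → (mg.1 = mf.1 ∨ ltC mg.1 mf.1)) ∧ (mg.2 = 1 → c = 1) ∧
     w = (Multiplicative.ofAdd L, mf.2) ∧
     p = e (Lf, 1) * f - e (Lg, c) * g * e (1, d)) ∨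
  -- C₂ : overlap
  (∃ c d c₀ : FreeMonoid Y, c₀ ≠ 1 ∧ mf.2 = c * c₀ ∧ mg.2 = c₀ * d ∧
     w = (Multiplicative.ofAdd L, mf.2 * d) ∧
     p = e (Lf, 1) * f * e (1, d) - e (Lg, c) * g) ∨
  -- C₃ : external
  (∃ c₀ : FreeMonoid Y, fX ∩ gX ≠ 0 ∧ mf.2 ≠ 1 ∧ mg.2 ≠ 1 ∧
     w = (Multiplicative.ofAdd L, mf.2 * c₀ * mg.2) ∧
     p = e (Lf, 1) * f * e (1, c₀ * mg.2) - e (Lg, mf.2 * c₀) * g)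

/-- Gröbner–Shirshov basis in `k[X] ⊗ k⟨Y⟩` in the sense of Mikhalev–Zolotykh. -/
def MZGSB {k X Y : Type*} [Ring k] [DecidableEq X]
    (ltC : Multiplicative (Multiset X) → Multiplicative (Multiset X) → Prop)
    (ltY : FreeMonoid Y → FreeMonoid Y → Prop)
    (S : Set (MonoidAlgebra k (CW X Y))) : Prop :=
  (∀ s ∈ S, MonicR (cwOrd ltC ltY) s) ∧
  ∀ f ∈ S, ∀ g ∈ S, ∀ (mf mg : CW X Y) (p : MonoidAlgebra k (CW X Y)) (w : CW X Y),
    IsLeadR (cwOrd ltC ltY) f mf → IsLeadR (cwOrd ltC ltY) g mg →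
    MZComp ltC f g mf mg p w → TrivModR (cwOrd ltC ltY) S w p

/-! Project `w = a₁ s̄₁ b₁ = a₂ s̄₂ b₂` to `X*` and to `Y*`. In each free monoid the two
occurrences of leading words are disjoint, nested or overlapping, and after cancelling a common
left and right factor they form a minimal ambiguity. Unless both projections are disjoint, the
pair of minimal ambiguities is exactly one of the compositions of `(s₁, s₂)` or of `(s₂, s₁)`,
which is trivial because `S` is a Gröbner–Shirshov basis; multiplying back the common factors
keeps it trivial because the order is monomial. When both projections are disjoint, expanding
`s₂` around `s₁` and `s₁` around `s₂` gives the same double sum, and since both leading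
coefficients are `1` the difference is a combination of strictly smaller terms. -/

theorem IsLeadR.unique {k M : Type*} [Semiring k] {lt : M → M → Prop} [Std.Asymm lt]
    {f : MonoidAlgebra k M} {m m' : M} (h : IsLeadR lt f m) (h' : IsLeadR lt f m') : m = m' := by
  by_contra hne
  exact asymm (h'.2 m h.1 hne) (h.2 m' h'.1 (Ne.symm hne))

section Semiring

variable {k M : Type*} [Semiring k] [Monoid M] {lt : M → M → Prop}
  {S : Set (MonoidAlgebra k M)} {w : M}

theorem mono_one : mono k (1 : M) = 1 := map_one _

theorem mono_mul (u v : M) : mono k (u * v) = mono k u * mono k v := map_mul _ _ _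

theorem mono_mul_mul_eq_sum (c d : M) (f : MonoidAlgebra k M) :
    mono k c * f * mono k d = ∑ t ∈ f.coeff.support, f.coeff t • mono k (c * t * d) := by
  conv_lhs => rw [← MonoidAlgebra.sum_coeff_single f]
  rw [Finsupp.sum, Finset.mul_sum, Finset.sum_mul]
  refine Finset.sum_congr rfl fun t _ => ?_
  simp only [mono, MonoidAlgebra.of_apply, MonoidAlgebra.single_mul_single,
    MonoidAlgebra.smul_single', one_mul, mul_one]

namespace TrivModR

theorem zero : TrivModR lt S w 0 :=
  ⟨0, Fin.elim0, Fin.elim0, Fin.elim0, Fin.elim0, fun i => i.elim0, by simp, fun i => i.elim0⟩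

theorem add {h₁ h₂ : MonoidAlgebra k M} (H₁ : TrivModR lt S w h₁)
    (H₂ : TrivModR lt S w h₂) : TrivModR lt S w (h₁ + h₂) := by
  obtain ⟨n, α, a, b, s, hs, rfl, hl⟩ := H₁
  obtain ⟨n', α', a', b', s', hs', rfl, hl'⟩ := H₂
  refine ⟨n + n', Fin.append α α', Fin.append a a', Fin.append b b', Fin.append s s',
    Fin.addCases (by simpa using hs) (by simpa using hs'), ?_,
    Fin.addCases (by simpa using hl) (by simpa using hl')⟩
  simp [Fin.sum_univ_add]

theorem sum {ι : Type*} (T : Finset ι) {h : ι → MonoidAlgebra k M}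
    (H : ∀ i ∈ T, TrivModR lt S w (h i)) : TrivModR lt S w (∑ i ∈ T, h i) :=
  Finset.sum_induction h _ (fun _ _ => add) zero H

theorem smul_mono_mul_mul {s : MonoidAlgebra k M} (hs : s ∈ S) {m : M} (hm : IsLeadR lt s m)
    {a b : M} (hlt : lt (a * m * b) w) (α : k) :
    TrivModR lt S w (α • (mono k a * s * mono k b)) :=
  ⟨1, fun _ => α, fun _ => a, fun _ => b, fun _ => s, fun _ => hs, by simp, fun _ => ⟨m, hm, hlt⟩⟩

end TrivModR

end Semiring

namespace TrivModR

variable {k M : Type*} [Ring k] [Monoid M] {lt : M → M → Prop}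
  {S : Set (MonoidAlgebra k M)} {w : M}

theorem neg {h : MonoidAlgebra k M} (H : TrivModR lt S w h) : TrivModR lt S w (-h) := by
  obtain ⟨n, α, a, b, s, hs, rfl, hl⟩ := H
  exact ⟨n, -α, a, b, s, hs, by simp [neg_smul], hl⟩

theorem sub {h₁ h₂ : MonoidAlgebra k M} (H₁ : TrivModR lt S w h₁)
    (H₂ : TrivModR lt S w h₂) : TrivModR lt S w (h₁ - h₂) := by
  simpa only [sub_eq_add_neg] using H₁.add H₂.neg

theorem sub_comm {h₁ h₂ : MonoidAlgebra k M} (H : TrivModR lt S w (h₂ - h₁)) :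
    TrivModR lt S w (h₁ - h₂) := by
  simpa only [neg_sub] using H.neg

end TrivModR

namespace TrivModR

variable {k M : Type*} [CommSemiring k] [Monoid M] {lt : M → M → Prop}
  {S : Set (MonoidAlgebra k M)} {w : M}

theorem mono_mul_mul (hcompat : ∀ u v l r : M, lt u v → lt (l * u * r) (l * v * r))
    {p : MonoidAlgebra k M} (H : TrivModR lt S w p) (l r : M) :
    TrivModR lt S (l * w * r) (mono k l * p * mono k r) := by
  obtain ⟨n, α, a, b, s, hs, rfl, hl⟩ := H
  refine ⟨n, α, fun i => l * a i, fun i => b i * r, s, hs, ?_, fun i => ?_⟩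
  · simp only [Finset.mul_sum, Finset.sum_mul, mul_smul_comm, smul_mul_assoc, mono_mul, mul_assoc]
  · obtain ⟨m, hm, hlt⟩ := hl i
    exact ⟨m, hm, by simpa only [mul_assoc] using hcompat _ _ l r hlt⟩

end TrivModR

namespace TrivModR

variable {k M : Type*} [CommRing k] [Monoid M] {lt : M → M → Prop}
  {S : Set (MonoidAlgebra k M)} {w : M}

theorem mono_mul_mul_sub (hcompat : ∀ u v l r : M, lt u v → lt (l * u * r) (l * v * r))
    {s₁ s₂ : MonoidAlgebra k M} {p₁ q₁ p₂ q₂ : M}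
    (H : TrivModR lt S w (mono k p₁ * s₁ * mono k q₁ - mono k p₂ * s₂ * mono k q₂)) (l r : M) :
    TrivModR lt S (l * w * r)
      (mono k (l * p₁) * s₁ * mono k (q₁ * r) - mono k (l * p₂) * s₂ * mono k (q₂ * r)) := by
  convert H.mono_mul_mul hcompat l r using 1
  simp only [mono_mul, mul_sub, sub_mul, mul_assoc]

theorem of_independent (hcompat : ∀ u v l r : M, lt u v → lt (l * u * r) (l * v * r))
    {s₁ s₂ : MonoidAlgebra k M} (hs₁ : s₁ ∈ S) (hs₂ : s₂ ∈ S) {m₁ m₂ : M}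
    (hm₁ : IsLeadR lt s₁ m₁) (h₁ : s₁.coeff m₁ = 1) (hm₂ : IsLeadR lt s₂ m₂)
    (h₂ : s₂.coeff m₂ = 1) (L₁ R₁ L₂ R₂ : M → M)
    (hLR : ∀ t t', L₁ t' * t * R₁ t' = L₂ t * t' * R₂ t) (hw : L₁ m₂ * m₁ * R₁ m₂ = w) :
    TrivModR lt S w
      (mono k (L₁ m₂) * s₁ * mono k (R₁ m₂) - mono k (L₂ m₁) * s₂ * mono k (R₂ m₁)) := by
  classical
  set F₁ : M → MonoidAlgebra k M := fun t' => mono k (L₁ t') * s₁ * mono k (R₁ t')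
  set F₂ : M → MonoidAlgebra k M := fun t => mono k (L₂ t) * s₂ * mono k (R₂ t)
  have hsum : ∑ t' ∈ s₂.coeff.support, s₂.coeff t' • F₁ t'
      = ∑ t ∈ s₁.coeff.support, s₁.coeff t • F₂ t := by
    simp only [F₁, F₂, mono_mul_mul_eq_sum, Finset.smul_sum, smul_smul, hLR]
    rw [Finset.sum_comm]
    exact Finset.sum_congr rfl fun _ _ => Finset.sum_congr rfl fun _ _ => by rw [mul_comm]
  rw [← Finset.add_sum_erase _ _ hm₂.1, ← Finset.add_sum_erase _ _ hm₁.1, h₁, h₂, one_smul,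
    one_smul] at hsum
  rw [sub_eq_sub_iff_add_eq_add.2 (hsum.trans (add_comm _ _))]
  refine .sub (.sum _ fun t ht => .smul_mono_mul_mul hs₂ hm₂ ?_ _)
    (.sum _ fun t' ht' => .smul_mono_mul_mul hs₁ hm₁ ?_ _)
  · rw [← hLR, ← hw]
    exact hcompat _ _ _ _ (hm₁.2 t (Finset.mem_of_mem_erase ht) (Finset.ne_of_mem_erase ht))
  · rw [hLR, ← hw, hLR]
    exact hcompat _ _ _ _ (hm₂.2 t' (Finset.mem_of_mem_erase ht') (Finset.ne_of_mem_erase ht'))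

end TrivModR

namespace FreeMonoid

variable {α : Type*}

theorem exists_eq_mul_of_mul_eq_mul {a b c d : FreeMonoid α} (h : a * b = c * d)
    (hle : a.length ≤ c.length) : ∃ u, c = a * u ∧ b = u * d := by
  have hl : a.toList ++ b.toList = c.toList ++ d.toList := by
    simpa only [toList_mul] using congrArg toList h
  rcases List.append_eq_append_iff.1 hl with ⟨u, hc, hb⟩ | ⟨u, ha, hd⟩
  · exact ⟨ofList u, toList.injective (by simpa using hc), toList.injective (by simpa using hb)⟩
  · have hu : u = [] := by
      have := congrArg List.length ha
      simp only [List.length_append] at this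
      exact List.length_eq_zero_iff.1 (by unfold length at hle; omega)
    subst hu
    exact ⟨1, toList.injective (by simpa using ha.symm), toList.injective (by simpa using hd.symm)⟩

/-- `w = p₁ * F * q₁ = p₂ * G * q₂`, where the occurrence of `F` does not start after that of `G`
and the two occurrences together cover `w`. -/
inductive Ambiguity (F G : FreeMonoid α) :
    FreeMonoid α → FreeMonoid α → FreeMonoid α → FreeMonoid α → FreeMonoid α → Prop
  | disjoint (u : FreeMonoid α) : Ambiguity F G (F * u * G) 1 (u * G) (F * u) 1
  | inclusion (a b : FreeMonoid α) (h : F = a * G * b) : Ambiguity F G F 1 1 a b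
  | intersection (a b : FreeMonoid α) (h : F * a = b * G)
      (hlen : (F * a).length < F.length + G.length) : Ambiguity F G (F * a) 1 a b 1

variable {F G w p₁ q₁ p₂ q₂ : FreeMonoid α}

theorem Ambiguity.mul_eq_left : Ambiguity F G w p₁ q₁ p₂ q₂ → p₁ * F * q₁ = w
  | .disjoint _ => by simp only [one_mul, mul_assoc]
  | .inclusion _ _ _ => by simp only [one_mul, mul_one]
  | .intersection _ _ _ _ => by simp only [one_mul]

theorem Ambiguity.mul_eq_right : Ambiguity F G w p₁ q₁ p₂ q₂ → p₂ * G * q₂ = w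
  | .disjoint _ => by simp only [mul_one]
  | .inclusion _ _ h => h.symm
  | .intersection _ _ h _ => by rw [mul_one, h]

theorem exists_ambiguity_of_length_le {A₁ B₁ A₂ B₂ : FreeMonoid α}
    (h : A₁ * F * B₁ = A₂ * G * B₂) (hle : A₁.length ≤ A₂.length) :
    ∃ l r w p₁ q₁ p₂ q₂, Ambiguity F G w p₁ q₁ p₂ q₂ ∧
      A₁ = l * p₁ ∧ B₁ = q₁ * r ∧ A₂ = l * p₂ ∧ B₂ = q₂ * r := by
  obtain ⟨u, hA₂, hu⟩ := exists_eq_mul_of_mul_eq_mul (by simpa only [mul_assoc] using h) hle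
  rcases le_or_gt F.length u.length with hFu | huF
  · obtain ⟨v, rfl, hB₁⟩ := exists_eq_mul_of_mul_eq_mul hu hFu
    exact ⟨A₁, B₂, _, _, _, _, _, .disjoint v, (mul_one _).symm, by rw [hB₁, mul_assoc], hA₂,
      (one_mul _).symm⟩
  obtain ⟨t, hF, ht⟩ := exists_eq_mul_of_mul_eq_mul hu.symm huF.le
  rcases le_or_gt G.length t.length with hGt | htG
  · obtain ⟨b, rfl, hB₂⟩ := exists_eq_mul_of_mul_eq_mul ht hGt
    exact ⟨A₁, B₁, _, _, _, _, _, .inclusion u b (by rw [hF, mul_assoc]), (mul_one _).symm,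
      (one_mul _).symm, hA₂, hB₂⟩
  · obtain ⟨a, hG, hB₁⟩ := exists_eq_mul_of_mul_eq_mul ht.symm htG.le
    refine ⟨A₁, B₂, _, _, _, _, _, .intersection a u (by rw [hF, hG, mul_assoc]) ?_,
      (mul_one _).symm, hB₁, hA₂, (one_mul _).symm⟩
    simp only [hF, hG, length_mul] at huF ⊢
    omega

theorem exists_ambiguity {A₁ B₁ A₂ B₂ : FreeMonoid α} (h : A₁ * F * B₁ = A₂ * G * B₂) :
    ∃ l r w p₁ q₁ p₂ q₂, (Ambiguity F G w p₁ q₁ p₂ q₂ ∨ Ambiguity G F w p₂ q₂ p₁ q₁) ∧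
      A₁ = l * p₁ ∧ B₁ = q₁ * r ∧ A₂ = l * p₂ ∧ B₂ = q₂ * r := by
  rcases le_total A₁.length A₂.length with hle | hle
  · obtain ⟨l, r, w, p₁, q₁, p₂, q₂, hamb, h⟩ := exists_ambiguity_of_length_le h hle
    exact ⟨l, r, w, p₁, q₁, p₂, q₂, .inl hamb, h⟩
  · obtain ⟨l, r, w, p₂, q₂, p₁, q₁, hamb, h₂, h₂', h₁, h₁'⟩ :=
      exists_ambiguity_of_length_le h.symm hle
    exact ⟨l, r, w, p₁, q₁, p₂, q₂, .inr hamb, h₁, h₁', h₂, h₂'⟩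

end FreeMonoid

section NormalWords

open FreeMonoid

variable {k X Y : Type*} [CommRing k] {ltX : FreeMonoid X → FreeMonoid X → Prop}
  {ltY : FreeMonoid Y → FreeMonoid Y → Prop} {S : Set (MonoidAlgebra k (NW X Y))}

theorem lexNW_eq_prodLex : lexNW ltX ltY = Prod.Lex ltX ltY := by
  funext u v
  exact propext Prod.lex_def.symm

theorem MonOrd.lexNW_mul_mul (hX : MonOrd ltX) (hY : MonOrd ltY) (u v l r : NW X Y)
    (h : lexNW ltX ltY u v) : lexNW ltX ltY (l * u * r) (l * v * r) := by
  rcases h with h | ⟨he, h⟩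
  · exact .inl (hX.2.2 _ _ _ _ h)
  · exact .inr ⟨by simp [he], hY.2.2 _ _ _ _ h⟩

theorem IsGSB.coeff_eq_one (hX : MonOrd ltX) (hY : MonOrd ltY) (hS : IsGSB (lexNW ltX ltY) S)
    {s : MonoidAlgebra k (NW X Y)} (hs : s ∈ S) {m : NW X Y} (hm : IsLeadR (lexNW ltX ltY) s m) :
    s.coeff m = 1 := by
  obtain ⟨m', hm', h₁⟩ := hS.1 s hs
  have := hX.1
  have := hY.1
  have : Std.Asymm (lexNW ltX ltY) := lexNW_eq_prodLex ▸ inferInstance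
  rwa [hm.unique hm']

variable {s₁ s₂ : MonoidAlgebra k (NW X Y)} {fx gx wx p₁x q₁x p₂x q₂x : FreeMonoid X}
  {fy gy wy p₁y q₁y p₂y q₂y : FreeMonoid Y}

theorem IsGSB.trivModR_of_ambiguity (hX : MonOrd ltX) (hY : MonOrd ltY)
    (hS : IsGSB (lexNW ltX ltY) S) (hs₁ : s₁ ∈ S) (hs₂ : s₂ ∈ S)
    (hm₁ : IsLeadR (lexNW ltX ltY) s₁ (fx, fy)) (hm₂ : IsLeadR (lexNW ltX ltY) s₂ (gx, gy))
    (ax : Ambiguity fx gx wx p₁x q₁x p₂x q₂x) (ay : Ambiguity fy gy wy p₁y q₁y p₂y q₂y) :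
    TrivModR (lexNW ltX ltY) S (wx, wy)
      (mono k (p₁x, p₁y) * s₁ * mono k (q₁x, q₁y) -
        mono k (p₂x, p₂y) * s₂ * mono k (q₂x, q₂y)) := by
  have comp {p w} (h : IsComp s₁ s₂ (fx, fy) (gx, gy) p w) : TrivModR (lexNW ltX ltY) S w p :=
    hS.2 s₁ hs₁ s₂ hs₂ _ _ p w hm₁ hm₂ h
  -- Except when both projections are disjoint, the pair of configurations is a disjunct of
  -- `IsComp`, once the trivial factors `mono k 1` are removed.
  cases ax with
  | disjoint u =>
    cases ay with
    | disjoint v =>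
      exact .of_independent (hX.lexNW_mul_mul hY) hs₁ hs₂ hm₁ (hS.coeff_eq_one hX hY hs₁ hm₁) hm₂
        (hS.coeff_eq_one hX hY hs₂ hm₂) (fun _ => (1, 1)) (fun t => (u * t.1, v * t.2))
        (fun t => (t.1 * u, t.2 * v)) (fun _ => (1, 1))
        (fun _ _ => by ext <;> simp [mul_assoc]) (by ext <;> simp [mul_assoc])
    | inclusion _ _ h =>
      simp only [Prod.mk_one_one, mono_one, one_mul]
      exact comp (.inr <| .inl ⟨_, _, _, h, .inl ⟨rfl, rfl⟩⟩)
    | intersection _ _ h hlen =>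
      simp only [Prod.mk_one_one, mono_one, one_mul, mul_one]
      exact comp (.inr <| .inr <| .inr <| .inr <| .inr <| .inl ⟨_, _, _, h, hlen, .inl ⟨rfl, rfl⟩⟩)
  | inclusion _ _ h =>
    cases ay with
    | disjoint v =>
      simp only [Prod.mk_one_one, mono_one, one_mul]
      exact comp (.inl ⟨_, _, _, h, .inl ⟨rfl, rfl⟩⟩)
    | inclusion _ _ h' =>
      simp only [Prod.mk_one_one, mono_one, one_mul, mul_one]
      exact comp (.inr <| .inr <| .inl ⟨_, _, _, _, h, h', rfl, rfl⟩)
    | intersection _ _ h' hlen' =>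
      simp only [Prod.mk_one_one, mono_one, one_mul]
      exact comp (.inr <| .inr <| .inr <| .inr <| .inr <| .inr <| .inr <| .inr <| .inl
        ⟨_, _, _, _, h, .inl ⟨h', hlen', rfl, rfl⟩⟩)
  | intersection _ _ h hlen =>
    cases ay with
    | disjoint v =>
      simp only [Prod.mk_one_one, mono_one, one_mul, mul_one]
      exact comp (.inr <| .inr <| .inr <| .inr <| .inl ⟨_, _, _, h, hlen, .inl ⟨rfl, rfl⟩⟩)
    | inclusion _ _ h' =>
      simp only [Prod.mk_one_one, mono_one, one_mul]
      exact comp (.inr <| .inr <| .inr <| .inr <| .inr <| .inr <| .inr <| .inr <| .inr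
        ⟨_, _, _, _, h, hlen, .inl ⟨h', rfl, rfl⟩⟩)
    | intersection _ _ h' hlen' =>
      simp only [Prod.mk_one_one, mono_one, one_mul, mul_one]
      exact comp (.inr <| .inr <| .inr <| .inr <| .inr <| .inr <| .inl
        ⟨_, _, _, _, h, h', hlen, hlen', rfl, rfl⟩)

theorem IsGSB.trivModR_of_ambiguity_of_swap (hX : MonOrd ltX) (hY : MonOrd ltY)
    (hS : IsGSB (lexNW ltX ltY) S) (hs₁ : s₁ ∈ S) (hs₂ : s₂ ∈ S)
    (hm₁ : IsLeadR (lexNW ltX ltY) s₁ (fx, fy)) (hm₂ : IsLeadR (lexNW ltX ltY) s₂ (gx, gy))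
    (ax : Ambiguity fx gx wx p₁x q₁x p₂x q₂x) (ay : Ambiguity gy fy wy p₂y q₂y p₁y q₁y) :
    TrivModR (lexNW ltX ltY) S (wx, wy)
      (mono k (p₁x, p₁y) * s₁ * mono k (q₁x, q₁y) -
        mono k (p₂x, p₂y) * s₂ * mono k (q₂x, q₂y)) := by
  have comp {p w} (h : IsComp s₁ s₂ (fx, fy) (gx, gy) p w) : TrivModR (lexNW ltX ltY) S w p :=
    hS.2 s₁ hs₁ s₂ hs₂ _ _ p w hm₁ hm₂ h
  have comp' {p w} (h : IsComp s₂ s₁ (gx, gy) (fx, fy) p w) : TrivModR (lexNW ltX ltY) S w p :=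
    hS.2 s₂ hs₂ s₁ hs₁ _ _ p w hm₂ hm₁ h
  -- `IsComp` writes an ambiguity `gy * c = d * fy` as `d * fy`, hence the rewrites by `h'`.
  cases ax with
  | disjoint u =>
    cases ay with
    | disjoint v =>
      exact .of_independent (hX.lexNW_mul_mul hY) hs₁ hs₂ hm₁ (hS.coeff_eq_one hX hY hs₁ hm₁) hm₂
        (hS.coeff_eq_one hX hY hs₂ hm₂) (fun t => (1, t.2 * v)) (fun t => (u * t.1, 1))
        (fun t => (t.1 * u, 1)) (fun t => (1, v * t.2))
        (fun _ _ => by ext <;> simp [mul_assoc]) (by ext <;> simp [mul_assoc])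
    | inclusion _ _ h =>
      simp only [Prod.mk_one_one, mono_one, mul_one]
      exact .sub_comm (comp' (.inr <| .inl ⟨_, _, _, h, .inr ⟨rfl, rfl⟩⟩))
    | intersection _ _ h hlen =>
      exact .sub_comm (comp' (.inr <| .inr <| .inr <| .inr <| .inr <| .inl
        ⟨_, _, _, h, hlen, .inr ⟨rfl, rfl⟩⟩))
  | inclusion _ _ h =>
    cases ay with
    | disjoint v =>
      simp only [Prod.mk_one_one, mono_one, mul_one]
      exact comp (.inl ⟨_, _, _, h, .inr ⟨rfl, rfl⟩⟩)
    | inclusion _ _ h' =>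
      exact comp (.inr <| .inr <| .inr <| .inl ⟨_, _, _, _, h, h', rfl, rfl⟩)
    | intersection _ _ h' hlen' =>
      simp only [Prod.mk_one_one, mono_one, mul_one]
      rw [h']
      exact comp (.inr <| .inr <| .inr <| .inr <| .inr <| .inr <| .inr <| .inr <| .inl
        ⟨_, _, _, _, h, .inr ⟨h'.symm, by rwa [← h', add_comm], rfl, rfl⟩⟩)
  | intersection _ _ h hlen =>
    cases ay with
    | disjoint v =>
      exact comp (.inr <| .inr <| .inr <| .inr <| .inl ⟨_, _, _, h, hlen, .inr ⟨rfl, rfl⟩⟩)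
    | inclusion _ _ h' =>
      simp only [Prod.mk_one_one, mono_one, mul_one]
      exact comp (.inr <| .inr <| .inr <| .inr <| .inr <| .inr <| .inr <| .inr <| .inr
        ⟨_, _, _, _, h, hlen, .inr ⟨h', rfl, rfl⟩⟩)
    | intersection _ _ h' hlen' =>
      rw [h']
      exact comp (.inr <| .inr <| .inr <| .inr <| .inr <| .inr <| .inr <| .inl
        ⟨_, _, _, _, h, h'.symm, hlen, by rwa [← h', add_comm], rfl, rfl⟩)

theorem IsGSB.trivModR_of_ambiguity_or (hX : MonOrd ltX) (hY : MonOrd ltY)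
    (hS : IsGSB (lexNW ltX ltY) S) (hs₁ : s₁ ∈ S) (hs₂ : s₂ ∈ S)
    (hm₁ : IsLeadR (lexNW ltX ltY) s₁ (fx, fy)) (hm₂ : IsLeadR (lexNW ltX ltY) s₂ (gx, gy))
    (ax : Ambiguity fx gx wx p₁x q₁x p₂x q₂x ∨ Ambiguity gx fx wx p₂x q₂x p₁x q₁x)
    (ay : Ambiguity fy gy wy p₁y q₁y p₂y q₂y ∨ Ambiguity gy fy wy p₂y q₂y p₁y q₁y) :
    TrivModR (lexNW ltX ltY) S (wx, wy)
      (mono k (p₁x, p₁y) * s₁ * mono k (q₁x, q₁y) -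
        mono k (p₂x, p₂y) * s₂ * mono k (q₂x, q₂y)) := by
  rcases ax with ax | ax <;> rcases ay with ay | ay
  · exact hS.trivModR_of_ambiguity hX hY hs₁ hs₂ hm₁ hm₂ ax ay
  · exact hS.trivModR_of_ambiguity_of_swap hX hY hs₁ hs₂ hm₁ hm₂ ax ay
  · exact (hS.trivModR_of_ambiguity_of_swap hX hY hs₂ hs₁ hm₂ hm₁ ax ay).sub_comm
  · exact (hS.trivModR_of_ambiguity hX hY hs₂ hs₁ hm₂ hm₁ ax ay).sub_comm

end NormalWords

/-- if `S` is a Gröbner–Shirshov basis in `k⟨X⟩ ⊗ k⟨Y⟩` and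
`w = a₁s̄₁b₁ = a₂s̄₂b₂` with `s₁, s₂ ∈ S`, then `a₁s₁b₁ - a₂s₂b₂` is trivial
modulo `(S, w)`. -/
theorem stmt_4 {k X Y : Type*} [Field k]
    (ltX : FreeMonoid X → FreeMonoid X → Prop) (ltY : FreeMonoid Y → FreeMonoid Y → Prop)
    (hX : MonOrd ltX) (hY : MonOrd ltY)
    (S : Set (MonoidAlgebra k (NW X Y))) (hS : IsGSB (lexNW ltX ltY) S)
    (s₁ s₂ : MonoidAlgebra k (NW X Y)) (hs₁ : s₁ ∈ S) (hs₂ : s₂ ∈ S)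
    (m₁ m₂ : NW X Y)
    (hm₁ : IsLeadR (lexNW ltX ltY) s₁ m₁) (hm₂ : IsLeadR (lexNW ltX ltY) s₂ m₂)
    (a₁ b₁ a₂ b₂ w : NW X Y)
    (hw₁ : w = a₁ * m₁ * b₁) (hw₂ : w = a₂ * m₂ * b₂) :
    TrivModR (lexNW ltX ltY) S w
      (mono k a₁ * s₁ * mono k b₁ - mono k a₂ * s₂ * mono k b₂) := by
  obtain ⟨fx, fy⟩ := m₁
  obtain ⟨gx, gy⟩ := m₂
  obtain ⟨A₁, C₁⟩ := a₁
  obtain ⟨B₁, E₁⟩ := b₁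
  obtain ⟨A₂, C₂⟩ := a₂
  obtain ⟨B₂, E₂⟩ := b₂
  have hx : A₁ * fx * B₁ = A₂ * gx * B₂ := congrArg Prod.fst (hw₁.symm.trans hw₂)
  have hy : C₁ * fy * E₁ = C₂ * gy * E₂ := congrArg Prod.snd (hw₁.symm.trans hw₂)
  obtain ⟨lx, rx, wx, p₁x, q₁x, p₂x, q₂x, ax, rfl, rfl, rfl, rfl⟩ := FreeMonoid.exists_ambiguity hx
  obtain ⟨ly, ry, wy, p₁y, q₁y, p₂y, q₂y, ay, rfl, rfl, rfl, rfl⟩ := FreeMonoid.exists_ambiguity hy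
  have hw : w = (lx, ly) * (wx, wy) * (rx, ry) := by
    rw [hw₁, ← ax.elim (·.mul_eq_left) (·.mul_eq_right),
      ← ay.elim (·.mul_eq_left) (·.mul_eq_right)]
    ext <;> simp only [Prod.fst_mul, Prod.snd_mul, mul_assoc]
  rw [hw]
  exact (hS.trivModR_of_ambiguity_or hX hY hs₁ hs₂ hm₁ hm₂ ax ay).mono_mul_mul_sub
    (hX.lexNW_mul_mul hY) _ _
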